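/- Under the trajectory distribution induced by any recommendation strategy g^ai, for every time t < T, every history realization h_t of positive probability with u_t^ai = g_t^ai(h_t), and every y' ∈ 𝒴, u^h ∈ 𝒰: P(Y_{t+1} = y', U_t^h = u^h | H_t = h_t) = (Σ_{s ∈ 𝒮} 𝟙[u^h = g^h(s, u_t^ai)] · b_t^s(s)) · (Σ_{x' ∈ 𝒳} Σ_{x ∈ 𝒳} P(y'|x') · P(x'|x, u^h) · b_t^x(x)); in particular this conditional distribution depends on h_t only through the pair of beliefs π_t = (b_t^s, b_t^x) and the recommendation u_t^ai. -/
import Mathlib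


open scoped ENNReal

noncomputable section

namespace CPHS

variable {𝒳 𝒮 𝒴 𝒰 𝒲 𝒵 𝒩 : Type}

/-- i.i.d. product PMF on vectors of length `n`. -/
def pmfVec {α : Type} (p : PMF α) : (n : ℕ) → PMF (Fin n → α)
  | 0 => PMF.pure Fin.elim0
  | n + 1 => (pmfVec p n).bind fun v => p.map fun a => Fin.snoc v a

/-- Safe getter for a vector of length `m + 1`. -/
def vget {α : Type} {m : ℕ} (v : Fin (m + 1) → α) (t : ℕ) : α :=
  v ⟨t % (m + 1), Nat.mod_lt _ (Nat.succ_pos m)⟩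

/-- History at time `t`: observations `Y_{0:t}` and past actions `U^h_{0:t-1}`, `U^ai_{0:t-1}`. -/
def Hist (𝒴 𝒰 : Type) (t : ℕ) : Type :=
  (Fin (t + 1) → 𝒴) × (Fin t → 𝒰) × (Fin t → 𝒰)

/-- Extension of a history by one step. -/
def Hist.ext {t : ℕ} (h : Hist 𝒴 𝒰 t) (y : 𝒴) (uh uai : 𝒰) : Hist 𝒴 𝒰 (t + 1) :=
  (Fin.snoc h.1 y, Fin.snoc h.2.1 uh, Fin.snoc h.2.2 uai)

/-- A recommendation strategy of the AI platform. -/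
def Strat (𝒴 𝒰 : Type) : Type := (t : ℕ) → Hist 𝒴 𝒰 t → 𝒰

/-- The human–AI system model. -/
structure System (𝒳 𝒮 𝒴 𝒰 𝒲 𝒵 𝒩 : Type) where
  T : ℕ
  pX0 : PMF 𝒳
  pS0 : PMF 𝒮
  pW : PMF 𝒲
  pZ : PMF 𝒵
  pN : PMF 𝒩
  f : 𝒳 → 𝒰 → 𝒲 → 𝒳
  o : 𝒳 → 𝒵 → 𝒴
  fh : 𝒮 → 𝒰 → 𝒴 → 𝒩 → 𝒮
  gh : 𝒮 → 𝒰 → 𝒰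

namespace System

variable (M : System 𝒳 𝒮 𝒴 𝒰 𝒲 𝒵 𝒩)

/-- Primitive sample space: initial states and all noises. -/
abbrev Ω : Type :=
  𝒳 × 𝒮 × (Fin (M.T + 1) → 𝒲) × (Fin (M.T + 1) → 𝒵) × (Fin (M.T + 1) → 𝒩)

/-- Joint PMF of the mutually independent primitive random variables. -/
def pΩ : PMF M.Ω :=
  M.pX0.bind fun x => M.pS0.bind fun s =>
    (pmfVec M.pW (M.T + 1)).bind fun w =>
      (pmfVec M.pZ (M.T + 1)).bind fun z =>
        (pmfVec M.pN (M.T + 1)).map fun n => (x, s, w, z, n)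

/-- Trajectory `(X_t, S_t, H_t)` generated by strategy `g` from primitive randomness `ω`. -/
def traj (g : Strat 𝒴 𝒰) (ω : M.Ω) : (t : ℕ) → 𝒳 × 𝒮 × Hist 𝒴 𝒰 t
  | 0 => (ω.1, ω.2.1, (fun _ => M.o ω.1 (vget ω.2.2.2.1 0), Fin.elim0, Fin.elim0))
  | t + 1 =>
      let p : 𝒳 × 𝒮 × Hist 𝒴 𝒰 t := traj g ω t
      let uai := g t p.2.2
      let uh := M.gh p.2.1 uai
      let x' := M.f p.1 uh (vget ω.2.2.1 t)
      let y' := M.o x' (vget ω.2.2.2.1 (t + 1))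
      let s' := M.fh p.2.1 uai y' (vget ω.2.2.2.2 t)
      (x', s', Hist.ext p.2.2 y' uh uai)

/-- System state process. -/
def X (g : Strat 𝒴 𝒰) (ω : M.Ω) (t : ℕ) : 𝒳 := (M.traj g ω t).1
/-- Internal state process. -/
def S (g : Strat 𝒴 𝒰) (ω : M.Ω) (t : ℕ) : 𝒮 := (M.traj g ω t).2.1
/-- History process. -/
def H (g : Strat 𝒴 𝒰) (ω : M.Ω) (t : ℕ) : Hist 𝒴 𝒰 t := (M.traj g ω t).2.2
/-- Observation process. -/
def Y (g : Strat 𝒴 𝒰) (ω : M.Ω) (t : ℕ) : 𝒴 := (M.H g ω t).1 (Fin.last t)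
/-- AI recommendation process. -/
def Uai (g : Strat 𝒴 𝒰) (ω : M.Ω) (t : ℕ) : 𝒰 := g t (M.H g ω t)
/-- Human action process. -/
def Uh (g : Strat 𝒴 𝒰) (ω : M.Ω) (t : ℕ) : 𝒰 := M.gh (M.S g ω t) (M.Uai g ω t)

/-- Probability of an event about the trajectory. -/
def pr (A : Set M.Ω) : ℝ := (M.pΩ.toOuterMeasure A).toReal

/-- Conditional probability `P(A | B)`. -/
def cpr (A B : Set M.Ω) : ℝ := M.pr (A ∩ B) / M.pr B

/-- Observation kernel `P(y | x')`. -/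
def Po (y : 𝒴) (x' : 𝒳) : ℝ := (M.pZ.toOuterMeasure {z | M.o x' z = y}).toReal
/-- Transition kernel `P(x' | x, u)`. -/
def Pt (x' x : 𝒳) (u : 𝒰) : ℝ := (M.pW.toOuterMeasure {w | M.f x u w = x'}).toReal
/-- Internal-state kernel `P^h(s' | s, u, y)`. -/
def Pn (s' s : 𝒮) (u : 𝒰) (y : 𝒴) : ℝ := (M.pN.toOuterMeasure {n | M.fh s u y n = s'}).toReal

/-- AI belief on the internal state, `b_t^s`. -/
def bS (g : Strat 𝒴 𝒰) {t : ℕ} (h : Hist 𝒴 𝒰 t) (s : 𝒮) : ℝ :=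
  M.cpr {ω | M.S g ω t = s} {ω | M.H g ω t = h}

/-- AI belief on the system state, `b_t^x`. -/
def bX (g : Strat 𝒴 𝒰) {t : ℕ} (h : Hist 𝒴 𝒰 t) (x : 𝒳) : ℝ :=
  M.cpr {ω | M.X g ω t = x} {ω | M.H g ω t = h}

/-- Conditional expectation `E[φ | B]`. -/
def cexp [Fintype 𝒳] [Fintype 𝒮] [Fintype 𝒲] [Fintype 𝒵] [Fintype 𝒩]
    (B : Set M.Ω) (φ : M.Ω → ℝ) : ℝ :=
  (∑ ω : M.Ω, Set.indicator B φ ω * (M.pΩ ω).toReal) / M.pr B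

/-- Expected total discounted reward of a strategy. -/
def J [Fintype 𝒳] [Fintype 𝒮] [Fintype 𝒲] [Fintype 𝒵] [Fintype 𝒩]
    (g : Strat 𝒴 𝒰) (r : 𝒳 → 𝒰 → ℝ) (γ : ℝ) : ℝ :=
  ∑ t ∈ Finset.range (M.T + 1), γ ^ t *
    ∑ ω : M.Ω, (M.pΩ ω).toReal * r (M.X g ω t) (M.Uh g ω t)


open Classical in
/-- The human's true conditional action distribution `P(U_t^h = u | h_t, u^ai)`. -/
def actDist [Fintype 𝒮] (g : Strat 𝒴 𝒰) {t : ℕ} (h : Hist 𝒴 𝒰 t) (uai u : 𝒰) : ℝ :=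
  ∑ s, (if u = M.gh s uai then (1 : ℝ) else 0) * M.bS g h s

open Classical in
/-- One-step Bellman operator on histories, using the beliefs `b_t^s, b_t^x`. -/
def Qstep [Fintype 𝒳] [Fintype 𝒮] [Fintype 𝒴] [Fintype 𝒰]
    (g : Strat 𝒴 𝒰) (r : 𝒳 → 𝒰 → ℝ) (γ : ℝ) {t : ℕ} (h : Hist 𝒴 𝒰 t) (u : 𝒰)
    (Vnext : Hist 𝒴 𝒰 (t + 1) → ℝ) : ℝ :=
  (∑ x, ∑ s, r x (M.gh s u) * M.bX g h x * M.bS g h s) +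
    γ * ∑ y' : 𝒴, ∑ uh : 𝒰,
      (∑ s, (if uh = M.gh s u then (1 : ℝ) else 0) * M.bS g h s) *
        (∑ x', ∑ x, M.Po y' x' * M.Pt x' x uh * M.bX g h x) * Vnext (h.ext y' uh u)

/-- Backward value recursion on histories; `n` is the number of remaining stages,
so that `V̄_t = Vbar (T + 1 - t) t` and `V̄_{T+1} ≡ 0`. -/
def Vbar [Fintype 𝒳] [Fintype 𝒮] [Fintype 𝒴] [Fintype 𝒰] [Nonempty 𝒰]
    (g : Strat 𝒴 𝒰) (r : 𝒳 → 𝒰 → ℝ) (γ : ℝ) : (n : ℕ) → (t : ℕ) → Hist 𝒴 𝒰 t → ℝ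
  | 0, _, _ => 0
  | n + 1, t, h =>
      Finset.univ.sup' Finset.univ_nonempty fun u =>
        M.Qstep g r γ h u (Vbar g r γ n (t + 1))

/-- `Q̄_t(h_t, u)`, defined through `V̄_{t+1}`. -/
def Qbar [Fintype 𝒳] [Fintype 𝒮] [Fintype 𝒴] [Fintype 𝒰] [Nonempty 𝒰]
    (g : Strat 𝒴 𝒰) (r : 𝒳 → 𝒰 → ℝ) (γ : ℝ) (t : ℕ) (h : Hist 𝒴 𝒰 t) (u : 𝒰) : ℝ :=
  M.Qstep g r γ h u (M.Vbar g r γ (M.T - t) (t + 1))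

/-- `V̄_t(h_t) = max_u Q̄_t(h_t, u)`. -/
def VbarT [Fintype 𝒳] [Fintype 𝒮] [Fintype 𝒴] [Fintype 𝒰] [Nonempty 𝒰]
    (g : Strat 𝒴 𝒰) (r : 𝒳 → 𝒰 → ℝ) (γ : ℝ) (t : ℕ) (h : Hist 𝒴 𝒰 t) : ℝ :=
  M.Vbar g r γ (M.T + 1 - t) t h

/-- Bayes-filter update `ψ^x` of the system-state belief. -/
def bayesX [Fintype 𝒳] (b : 𝒳 → ℝ) (uh : 𝒰) (y : 𝒴) : 𝒳 → ℝ := fun x' =>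
  (∑ x, M.Po y x' * M.Pt x' x uh * b x) /
    (∑ x'', ∑ x, M.Po y x'' * M.Pt x'' x uh * b x)

/-- One-step Bellman operator of the approximate human model on `Sh × Δ(𝒳)`. -/
def Qhatstep {Sh : Type} [Fintype 𝒳] [Fintype 𝒴] [Fintype 𝒰]
    (μhat : Sh → 𝒰 → PMF 𝒰) (ψhat : Sh → 𝒰 → 𝒴 → Sh) (r : 𝒳 → 𝒰 → ℝ) (γ : ℝ)
    (π : Sh × (𝒳 → ℝ)) (u : 𝒰) (Vnext : Sh × (𝒳 → ℝ) → ℝ) : ℝ :=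
  (∑ x, ∑ uh, r x uh * π.2 x * (μhat π.1 u uh).toReal) +
    γ * ∑ y' : 𝒴, ∑ uh : 𝒰, (μhat π.1 u uh).toReal *
      (∑ x', ∑ x, M.Po y' x' * M.Pt x' x uh * π.2 x) *
      Vnext (ψhat π.1 u y', M.bayesX π.2 uh y')

/-- Approximate value recursion; `n` is the number of remaining stages, so that
`V̂_t = Vhat (T + 1 - t)` and `V̂_{T+1} ≡ 0`. -/
def Vhat {Sh : Type} [Fintype 𝒳] [Fintype 𝒴] [Fintype 𝒰] [Nonempty 𝒰]
    (μhat : Sh → 𝒰 → PMF 𝒰) (ψhat : Sh → 𝒰 → 𝒴 → Sh) (r : 𝒳 → 𝒰 → ℝ) (γ : ℝ) :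
    (n : ℕ) → Sh × (𝒳 → ℝ) → ℝ
  | 0, _ => 0
  | n + 1, π =>
      Finset.univ.sup' Finset.univ_nonempty fun u =>
        M.Qhatstep μhat ψhat r γ π u (Vhat μhat ψhat r γ n)

/-- `Q̂_t(π̂, u)`, defined through `V̂_{t+1}`. -/
def Qhat {Sh : Type} [Fintype 𝒳] [Fintype 𝒴] [Fintype 𝒰] [Nonempty 𝒰]
    (μhat : Sh → 𝒰 → PMF 𝒰) (ψhat : Sh → 𝒰 → 𝒴 → Sh) (r : 𝒳 → 𝒰 → ℝ) (γ : ℝ)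
    (t : ℕ) (π : Sh × (𝒳 → ℝ)) (u : 𝒰) : ℝ :=
  M.Qhatstep μhat ψhat r γ π u (M.Vhat μhat ψhat r γ (M.T - t))

end System

/-- Total variation distance between two distributions on a finite type,
given as real-valued mass functions. -/
def tv {α : Type} [Fintype α] (p q : α → ℝ) : ℝ := (1 / 2) * ∑ a, |p a - q a|


section Aux

open Classical in
lemma pmfVec_apply {α : Type} (p : PMF α) : ∀ (n : ℕ) (v : Fin n → α),
    pmfVec p n v = ∏ i, p (v i)
  | 0, v => by
      have : v = Fin.elim0 := funext fun i => i.elim0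
      simp [pmfVec, this]
  | n + 1, v => by
      rw [pmfVec, PMF.bind_apply]
      rw [tsum_eq_single (Fin.init v) ?_]
      · rw [PMF.map_apply, tsum_eq_single (v (Fin.last n)) ?_]
        · rw [if_pos (Fin.snoc_init_self v).symm, pmfVec_apply p n,
            Fin.prod_univ_castSucc]
          rfl
        · intro a ha
          rw [if_neg]
          intro hv
          exact ha (by rw [hv, Fin.snoc_last])
      · intro v' hv'
        rw [PMF.map_apply]
        convert mul_zero _
        rw [ENNReal.tsum_eq_zero]
        intro a
        rw [if_neg]
        intro hv
        exact hv' (by rw [hv, Fin.init_snoc])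

end Aux
section Aux2
variable {𝒳 𝒮 𝒴 𝒰 𝒲 𝒵 𝒩 : Type} (M : System 𝒳 𝒮 𝒴 𝒰 𝒲 𝒵 𝒩)

open Classical in
lemma System.pΩ_apply (ω : M.Ω) :
    M.pΩ ω = M.pX0 ω.1 * M.pS0 ω.2.1 * pmfVec M.pW (M.T + 1) ω.2.2.1 *
      pmfVec M.pZ (M.T + 1) ω.2.2.2.1 * pmfVec M.pN (M.T + 1) ω.2.2.2.2 := by
  obtain ⟨x, s, w, z, n⟩ := ω
  simp only [System.pΩ, PMF.bind_apply, PMF.map_apply]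
  rw [tsum_eq_single x ?_]
  · rw [tsum_eq_single s ?_]
    · rw [tsum_eq_single w ?_]
      · rw [tsum_eq_single z ?_]
        · rw [tsum_eq_single n ?_]
          · rw [if_pos rfl]; ring
          · intro n' hn'; rw [if_neg]; simp [Prod.ext_iff]; tauto
        · intro z' hz'
          convert mul_zero _
          rw [ENNReal.tsum_eq_zero]
          intro n'; rw [if_neg]; simp [Prod.ext_iff]; tauto
      · intro w' hw'
        convert mul_zero _
        rw [ENNReal.tsum_eq_zero]; intro z'
        convert mul_zero _
        rw [ENNReal.tsum_eq_zero]
        intro n'; rw [if_neg]; simp [Prod.ext_iff]; tauto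
    · intro s' hs'
      convert mul_zero _
      rw [ENNReal.tsum_eq_zero]; intro w'
      convert mul_zero _
      rw [ENNReal.tsum_eq_zero]; intro z'
      convert mul_zero _
      rw [ENNReal.tsum_eq_zero]
      intro n'; rw [if_neg]; simp [Prod.ext_iff]; tauto
  · intro x' hx'
    convert mul_zero _
    rw [ENNReal.tsum_eq_zero]; intro s'
    convert mul_zero _
    rw [ENNReal.tsum_eq_zero]; intro w'
    convert mul_zero _
    rw [ENNReal.tsum_eq_zero]; intro z'
    convert mul_zero _
    rw [ENNReal.tsum_eq_zero]
    intro n'; rw [if_neg]; simp [Prod.ext_iff]; tauto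
end Aux2
section Aux3
open Classical

lemma sum_pmf_toReal {α : Type} [Fintype α] (p : PMF α) : ∑ a, (p a).toReal = 1 := by
  have h := p.tsum_coe
  rw [tsum_fintype] at h
  have := ENNReal.toReal_sum (s := Finset.univ) (f := fun a => p a)
    (fun a _ => p.apply_ne_top a)
  rw [h] at this
  simpa using this.symm

variable {𝒳 𝒮 𝒴 𝒰 𝒲 𝒵 𝒩 : Type} (M : System 𝒳 𝒮 𝒴 𝒰 𝒲 𝒵 𝒩)

lemma System.pr_eq_sum [Fintype 𝒳] [Fintype 𝒮] [Fintype 𝒲] [Fintype 𝒵] [Fintype 𝒩]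
    (A : Set M.Ω) :
    M.pr A = ∑ ω : M.Ω, if ω ∈ A then (M.pΩ ω).toReal else 0 := by
  rw [System.pr, PMF.toOuterMeasure_apply_fintype, ENNReal.toReal_sum
    (fun ω _ => ne_top_of_le_ne_top (M.pΩ.apply_ne_top ω) (Set.indicator_apply_le fun _ => le_rfl))]
  refine Finset.sum_congr rfl fun ω _ => ?_
  rw [Set.indicator_apply]
  split_ifs <;> simp

lemma System.Po_eq_sum [Fintype 𝒵] (y : 𝒴) (x' : 𝒳) :
    M.Po y x' = ∑ c, (M.pZ c).toReal * (if M.o x' c = y then (1:ℝ) else 0) := by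
  rw [System.Po, PMF.toOuterMeasure_apply_fintype, ENNReal.toReal_sum
    (fun c _ => ne_top_of_le_ne_top (M.pZ.apply_ne_top c) (Set.indicator_apply_le fun _ => le_rfl))]
  refine Finset.sum_congr rfl fun c _ => ?_
  simp only [Set.indicator_apply, Set.mem_setOf_eq]
  split_ifs with h1 <;> simp

lemma System.Pt_eq_sum [Fintype 𝒲] (x' x : 𝒳) (u : 𝒰) :
    M.Pt x' x u = ∑ c, (M.pW c).toReal * (if M.f x u c = x' then (1:ℝ) else 0) := by
  rw [System.Pt, PMF.toOuterMeasure_apply_fintype, ENNReal.toReal_sum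
    (fun c _ => ne_top_of_le_ne_top (M.pW.apply_ne_top c) (Set.indicator_apply_le fun _ => le_rfl))]
  refine Finset.sum_congr rfl fun c _ => ?_
  simp only [Set.indicator_apply, Set.mem_setOf_eq]
  split_ifs with h1 <;> simp

end Aux3
section Aux4
open Classical

/-- Freshness: if `F` is insensitive to coordinate `j`, the expectation of
`F v * φ (v j)` under an i.i.d. product factorizes. -/
lemma fresh_coord {α : Type} [Fintype α] (p : PMF α) {m : ℕ} (j : Fin m)
    (F : (Fin m → α) → ℝ) (hF : ∀ v a, F (Function.update v j a) = F v) (φ : α → ℝ) :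
    ∑ v : Fin m → α, (∏ i, (p (v i)).toReal) * (F v * φ (v j))
      = (∑ v : Fin m → α, (∏ i, (p (v i)).toReal) * F v) * (∑ a, (p a).toReal * φ a) := by
  set e := Equiv.funSplitAt j α with he
  have key : ∀ (G : (Fin m → α) → ℝ),
      ∑ v : Fin m → α, G v = ∑ q : α × ({ i // i ≠ j } → α), G (e.symm q) :=
    fun G => (Equiv.sum_comp e.symm G).symm
  have hsymm : ∀ (a : α) (u : { i // i ≠ j } → α) (i : Fin m) (h : i ≠ j),
      e.symm (a, u) i = u ⟨i, h⟩ := by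
    intro a u i h
    rw [he]
    simp only [Equiv.funSplitAt, Equiv.piSplitAt, Equiv.coe_fn_symm_mk]
    rw [dif_neg h]
  have hj : ∀ (a : α) (u : { i // i ≠ j } → α), e.symm (a, u) j = a := by
    intro a u
    rw [he]
    simp only [Equiv.funSplitAt, Equiv.piSplitAt, Equiv.coe_fn_symm_mk]
    simp
  have hupd : ∀ (a a' : α) (u : { i // i ≠ j } → α),
      e.symm (a, u) = Function.update (e.symm (a', u)) j a := by
    intro a a' u; funext i
    by_cases h : i = j
    · subst h; rw [Function.update_self, hj]
    · rw [Function.update_of_ne h, hsymm a u i h, hsymm a' u i h]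
  have hFe : ∀ (a a' : α) (u : { i // i ≠ j } → α), F (e.symm (a, u)) = F (e.symm (a', u)) := by
    intro a a' u; rw [hupd a a' u, hF]
  have hprod : ∀ (a : α) (u : { i // i ≠ j } → α),
      (∏ i, (p (e.symm (a, u) i)).toReal)
        = (p a).toReal * ∏ i : { i // i ≠ j }, (p (u i)).toReal := by
    intro a u
    rw [← Finset.mul_prod_erase Finset.univ _ (Finset.mem_univ j), hj]
    congr 1
    rw [Finset.prod_subtype (Finset.univ.erase j) (p := fun i => i ≠ j)
      (fun i => by simp) (fun i => (p (e.symm (a, u) i)).toReal)]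
    exact Finset.prod_congr rfl fun i _ => by rw [hsymm a u i.1 i.2]
  obtain ⟨c₀, -⟩ := p.support_nonempty
  set C := ∑ u : { i // i ≠ j } → α,
    (∏ i : { i // i ≠ j }, (p (u i)).toReal) * F (e.symm (c₀, u)) with hC
  have inner : ∀ a : α, ∑ u : { i // i ≠ j } → α,
      (∏ i, (p (e.symm (a, u) i)).toReal) * F (e.symm (a, u)) = (p a).toReal * C := by
    intro a
    rw [hC, Finset.mul_sum]
    refine Finset.sum_congr rfl fun u _ => ?_
    rw [hprod, hFe a c₀]; ring
  have innerφ : ∀ a : α, ∑ u : { i // i ≠ j } → α,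
      (∏ i, (p (e.symm (a, u) i)).toReal) * (F (e.symm (a, u)) * φ (e.symm (a, u) j))
        = ((p a).toReal * φ a) * C := by
    intro a
    rw [Finset.mul_sum]
    refine Finset.sum_congr rfl fun u _ => ?_
    rw [hprod, hFe a c₀, hj]; ring
  rw [key fun v => (∏ i, (p (v i)).toReal) * (F v * φ (v j)),
    key fun v => (∏ i, (p (v i)).toReal) * F v,
    Fintype.sum_prod_type, Fintype.sum_prod_type]
  calc ∑ a : α, ∑ u : { i // i ≠ j } → α,
        (∏ i, (p (e.symm (a, u) i)).toReal) * (F (e.symm (a, u)) * φ (e.symm (a, u) j))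
      = ∑ a : α, ((p a).toReal * φ a) * C := Finset.sum_congr rfl fun a _ => innerφ a
    _ = (∑ a : α, (p a).toReal * φ a) * C := by rw [Finset.sum_mul]
    _ = ((∑ a : α, (p a).toReal) * C) * (∑ a : α, (p a).toReal * φ a) := by
        rw [sum_pmf_toReal]; ring
    _ = (∑ a : α, ∑ u : { i // i ≠ j } → α,
          (∏ i, (p (e.symm (a, u) i)).toReal) * F (e.symm (a, u)))
        * (∑ a : α, (p a).toReal * φ a) := by
        rw [Finset.sum_mul (f := fun a => (p a).toReal)]
        congr 1
        exact (Finset.sum_congr rfl fun a _ => (inner a).symm)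

end Aux4
section Aux5
open Classical
variable {𝒳 𝒮 𝒴 𝒰 𝒲 𝒵 𝒩 : Type} (M : System 𝒳 𝒮 𝒴 𝒰 𝒲 𝒵 𝒩)

lemma System.sum_split [Fintype 𝒳] [Fintype 𝒮] [Fintype 𝒲] [Fintype 𝒵] [Fintype 𝒩]
    (F : 𝒳 → (Fin (M.T + 1) → 𝒲) → (Fin (M.T + 1) → 𝒵) → ℝ)
    (G : 𝒮 → (Fin (M.T + 1) → 𝒩) → ℝ) :
    ∑ ω : M.Ω, (M.pΩ ω).toReal * (F ω.1 ω.2.2.1 ω.2.2.2.1 * G ω.2.1 ω.2.2.2.2)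
      = (∑ x, ∑ w, ∑ z, (M.pX0 x).toReal * (∏ i, (M.pW (w i)).toReal) *
          (∏ i, (M.pZ (z i)).toReal) * F x w z) *
        (∑ s, ∑ n, (M.pS0 s).toReal * (∏ i, (M.pN (n i)).toReal) * G s n) := by
  simp only [Fintype.sum_prod_type]
  have hterm : ∀ x s w z n, (M.pΩ (x, s, w, z, n)).toReal *
      (F x w z * G s n) =
      ((M.pX0 x).toReal * (∏ i, (M.pW (w i)).toReal) * (∏ i, (M.pZ (z i)).toReal) * F x w z) *
      ((M.pS0 s).toReal * (∏ i, (M.pN (n i)).toReal) * G s n) := by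
    intro x s w z n
    rw [M.pΩ_apply (x, s, w, z, n)]
    simp only [ENNReal.toReal_mul, pmfVec_apply]
    rw [ENNReal.toReal_prod, ENNReal.toReal_prod, ENNReal.toReal_prod]
    ring
  calc ∑ x, ∑ s, ∑ w, ∑ z, ∑ n, (M.pΩ (x, s, w, z, n)).toReal * (F x w z * G s n)
      = ∑ x, ∑ s, ∑ w, ∑ z, ∑ n,
        ((M.pX0 x).toReal * (∏ i, (M.pW (w i)).toReal) * (∏ i, (M.pZ (z i)).toReal) * F x w z) *
        ((M.pS0 s).toReal * (∏ i, (M.pN (n i)).toReal) * G s n) := by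
        refine Finset.sum_congr rfl fun x _ => Finset.sum_congr rfl fun s _ =>
          Finset.sum_congr rfl fun w _ => Finset.sum_congr rfl fun z _ =>
          Finset.sum_congr rfl fun n _ => hterm x s w z n
    _ = ∑ x, ∑ w, ∑ z,
        ((M.pX0 x).toReal * (∏ i, (M.pW (w i)).toReal) * (∏ i, (M.pZ (z i)).toReal) * F x w z) *
        (∑ s, ∑ n, (M.pS0 s).toReal * (∏ i, (M.pN (n i)).toReal) * G s n) := by
        refine Finset.sum_congr rfl fun x _ => ?_
        rw [Finset.sum_comm]
        refine Finset.sum_congr rfl fun w _ => ?_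
        rw [Finset.sum_comm]
        refine Finset.sum_congr rfl fun z _ => ?_
        rw [Finset.mul_sum]
        refine Finset.sum_congr rfl fun s _ => ?_
        rw [Finset.mul_sum]
    _ = _ := by
        rw [Finset.sum_mul]
        refine Finset.sum_congr rfl fun x _ => ?_
        rw [Finset.sum_mul]
        refine Finset.sum_congr rfl fun w _ => ?_
        rw [Finset.sum_mul]

end Aux5
section Aux6
open Classical
variable {𝒳 𝒮 𝒴 𝒰 𝒲 𝒵 𝒩 : Type} (M : System 𝒳 𝒮 𝒴 𝒰 𝒲 𝒵 𝒩)

/-- Initial segment of a history. -/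
def Hist.init {t : ℕ} (h : Hist 𝒴 𝒰 (t + 1)) : Hist 𝒴 𝒰 t :=
  (Fin.init h.1, Fin.init h.2.1, Fin.init h.2.2)

lemma snoc_eq_iff' {β : Type} {t : ℕ} (v : Fin t → β) (c : β) (q : Fin (t + 1) → β) :
    Fin.snoc v c = q ↔ v = Fin.init q ∧ c = q (Fin.last t) := by
  constructor
  · rintro rfl
    exact ⟨by simp, by simp⟩
  · rintro ⟨rfl, rfl⟩
    exact Fin.snoc_init_self q

lemma Hist.ext_eq_iff {t : ℕ} (h' : Hist 𝒴 𝒰 t) (y : 𝒴) (uh uai : 𝒰)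
    (h : Hist 𝒴 𝒰 (t + 1)) :
    Hist.ext h' y uh uai = h ↔
      h' = Hist.init h ∧ y = h.1 (Fin.last (t + 1)) ∧ uh = h.2.1 (Fin.last t) ∧
        uai = h.2.2 (Fin.last t) := by
  obtain ⟨h1, h2, h3⟩ := h
  obtain ⟨g1, g2, g3⟩ := h'
  show (Fin.snoc g1 y, Fin.snoc g2 uh, Fin.snoc g3 uai) = ((h1, h2, h3) : Hist 𝒴 𝒰 (t+1)) ↔ _
  rw [show (((Fin.snoc g1 y, Fin.snoc g2 uh, Fin.snoc g3 uai)) = ((h1, h2, h3) : Hist 𝒴 𝒰 (t+1)))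
      ↔ (Fin.snoc g1 y = h1 ∧ Fin.snoc g2 uh = h2 ∧ Fin.snoc g3 uai = h3) from by
    constructor
    · intro hh
      exact ⟨congrArg Prod.fst hh, congrArg (fun p => p.2.1) hh, congrArg (fun p => p.2.2) hh⟩
    · rintro ⟨e1, e2, e3⟩
      rw [show ((Fin.snoc g1 y, Fin.snoc g2 uh, Fin.snoc g3 uai) : Hist 𝒴 𝒰 (t+1))
        = (h1, Fin.snoc g2 uh, Fin.snoc g3 uai) from by rw [e1],
        show ((h1, Fin.snoc g2 uh, Fin.snoc g3 uai) : Hist 𝒴 𝒰 (t+1))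
        = (h1, h2, Fin.snoc g3 uai) from by rw [e2],
        show ((h1, h2, Fin.snoc g3 uai) : Hist 𝒴 𝒰 (t+1)) = (h1, h2, h3) from by rw [e3]]]
  rw [snoc_eq_iff', snoc_eq_iff', snoc_eq_iff']
  simp only [Hist.init]
  constructor
  · rintro ⟨⟨e1, e2⟩, ⟨e3, e4⟩, e5, e6⟩
    subst e1; subst e2; subst e3; subst e4; subst e5; subst e6
    exact ⟨rfl, rfl, rfl, rfl⟩
  · rintro ⟨e0, e2, e4, e6⟩
    have e1 : g1 = Fin.init h1 := congrArg Prod.fst e0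
    have e3 : g2 = Fin.init h2 := congrArg (fun p => p.2.1) e0
    have e5 : g3 = Fin.init h3 := congrArg (fun p => p.2.2) e0
    exact ⟨⟨e1, e2⟩, ⟨e3, e4⟩, e5, e6⟩

lemma System.H_zero (g : Strat 𝒴 𝒰) (ω : M.Ω) :
    M.H g ω 0 = (fun _ => M.o ω.1 (vget ω.2.2.2.1 0), Fin.elim0, Fin.elim0) := rfl

lemma System.H_succ (g : Strat 𝒴 𝒰) (ω : M.Ω) (t : ℕ) :
    M.H g ω (t + 1) = Hist.ext (M.H g ω t)
      (M.o (M.f (M.X g ω t) (M.Uh g ω t) (vget ω.2.2.1 t)) (vget ω.2.2.2.1 (t + 1)))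
      (M.Uh g ω t) (M.Uai g ω t) := rfl

lemma System.X_succ (g : Strat 𝒴 𝒰) (ω : M.Ω) (t : ℕ) :
    M.X g ω (t + 1) = M.f (M.X g ω t) (M.Uh g ω t) (vget ω.2.2.1 t) := rfl

lemma System.S_succ (g : Strat 𝒴 𝒰) (ω : M.Ω) (t : ℕ) :
    M.S g ω (t + 1) = M.fh (M.S g ω t) (M.Uai g ω t)
      (M.o (M.f (M.X g ω t) (M.Uh g ω t) (vget ω.2.2.1 t)) (vget ω.2.2.2.1 (t + 1)))
      (vget ω.2.2.2.2 t) := rfl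

lemma System.Y_succ (g : Strat 𝒴 𝒰) (ω : M.Ω) (t : ℕ) :
    M.Y g ω (t + 1) = M.o (M.f (M.X g ω t) (M.Uh g ω t) (vget ω.2.2.1 t))
      (vget ω.2.2.2.1 (t + 1)) := by
  show (M.H g ω (t + 1)).1 (Fin.last (t + 1)) = _
  rw [M.H_succ g ω t]
  simp [Hist.ext]

/-- `v` and `v'` agree on coordinates of index below `k`. -/
def agr {β : Type} {m : ℕ} (k : ℕ) (v v' : Fin m → β) : Prop :=
  ∀ i : Fin m, (i : ℕ) < k → v i = v' i

lemma agr_mono {β : Type} {m : ℕ} {k k' : ℕ} (hk : k ≤ k') {v v' : Fin m → β}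
    (h : agr k' v v') : agr k v v' := fun i hi => h i (lt_of_lt_of_le hi hk)

lemma agr_vget {β : Type} {m : ℕ} {k : ℕ} {v v' : Fin (m + 1) → β}
    (h : agr (k + 1) v v') : vget v k = vget v' k :=
  h _ (lt_of_le_of_lt (Nat.mod_le k (m + 1)) (Nat.lt_succ_self k))

end Aux6
section Aux7
open Classical
variable {𝒳 𝒮 𝒴 𝒰 𝒲 𝒵 𝒩 : Type} (M : System 𝒳 𝒮 𝒴 𝒰 𝒲 𝒵 𝒩)

lemma System.split (g : Strat 𝒴 𝒰) (t : ℕ) (h : Hist 𝒴 𝒰 t) :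
    ∃ (Φ : 𝒳 → (Fin (M.T + 1) → 𝒲) → (Fin (M.T + 1) → 𝒵) → Prop)
      (ξ : 𝒳 → (Fin (M.T + 1) → 𝒲) → 𝒳)
      (Ψ : 𝒮 → (Fin (M.T + 1) → 𝒩) → Prop)
      (σ : 𝒮 → (Fin (M.T + 1) → 𝒩) → 𝒮),
      (∀ ω : M.Ω, M.H g ω t = h ↔ (Φ ω.1 ω.2.2.1 ω.2.2.2.1 ∧ Ψ ω.2.1 ω.2.2.2.2)) ∧
      (∀ ω : M.Ω, M.H g ω t = h → M.X g ω t = ξ ω.1 ω.2.2.1) ∧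
      (∀ ω : M.Ω, M.H g ω t = h → M.S g ω t = σ ω.2.1 ω.2.2.2.2) ∧
      (∀ x w w' z z', agr t w w' → agr (t + 1) z z' → (Φ x w z ↔ Φ x w' z')) ∧
      (∀ x w w', agr t w w' → ξ x w = ξ x w') ∧
      (∀ s n n', agr t n n' → (Ψ s n ↔ Ψ s n')) ∧
      (∀ s n n', agr t n n' → σ s n = σ s n') := by
  induction t with
  | zero =>
    refine ⟨fun x _ z => M.o x (vget z 0) = h.1 0, fun x _ => x, fun _ _ => True,
      fun s _ => s, ?_, fun ω _ => rfl, fun ω _ => rfl, ?_, fun _ _ _ _ => rfl,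
      fun _ _ _ _ => Iff.rfl, fun _ _ _ _ => rfl⟩
    · intro ω
      rw [M.H_zero g ω]
      constructor
      · intro hh
        exact ⟨(congrFun (congrArg Prod.fst hh) 0 : _), trivial⟩
      · rintro ⟨h0, -⟩
        refine Prod.ext ?_ (Prod.ext ?_ ?_)
        · funext i
          show M.o ω.1 (vget ω.2.2.2.1 0) = h.1 i
          rw [Fin.eq_zero i]
          exact h0
        · funext i; exact i.elim0
        · funext i; exact i.elim0
    · intro x w w' z z' _ hz
      dsimp only
      rw [agr_vget hz]
  | succ t ih =>
    obtain ⟨Φ, ξ, Ψ, σ, hiff, hX, hS, hΦd, hξd, hΨd, hσd⟩ := ih (Hist.init h)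
    refine ⟨fun x w z => Φ x w z ∧
        M.o (M.f (ξ x w) (h.2.1 (Fin.last t)) (vget w t)) (vget z (t + 1))
          = h.1 (Fin.last (t + 1)) ∧ g t (Hist.init h) = h.2.2 (Fin.last t),
      fun x w => M.f (ξ x w) (h.2.1 (Fin.last t)) (vget w t),
      fun s n => Ψ s n ∧ M.gh (σ s n) (g t (Hist.init h)) = h.2.1 (Fin.last t),
      fun s n => M.fh (σ s n) (g t (Hist.init h)) (h.1 (Fin.last (t + 1))) (vget n t),
      ?_, ?_, ?_, ?_, ?_, ?_, ?_⟩
    · intro ω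
      rw [M.H_succ g ω t, Hist.ext_eq_iff]
      dsimp only
      constructor
      · rintro ⟨hH, hy, huh, hua⟩
        obtain ⟨hΦ, hΨ⟩ := (hiff ω).1 hH
        have hXe := hX ω hH
        have hSe := hS ω hH
        have hUai : M.Uai g ω t = g t (Hist.init h) := by rw [System.Uai, hH]
        refine ⟨⟨hΦ, ?_, ?_⟩, hΨ, ?_⟩
        · rw [← hXe, ← huh]; exact hy
        · rw [← hUai]; exact hua
        · show M.gh (σ ω.2.1 ω.2.2.2.2) (g t (Hist.init h)) = h.2.1 (Fin.last t)
          rw [← hSe, ← hUai]; exact huh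
      · rintro ⟨⟨hΦ, hy, hua⟩, hΨ, hgh⟩
        have hH : M.H g ω t = Hist.init h := (hiff ω).2 ⟨hΦ, hΨ⟩
        have hXe := hX ω hH
        have hSe := hS ω hH
        have hUai : M.Uai g ω t = g t (Hist.init h) := by rw [System.Uai, hH]
        have hUh : M.Uh g ω t = h.2.1 (Fin.last t) := by
          show M.gh (M.S g ω t) (M.Uai g ω t) = _
          rw [hSe, hUai]; exact hgh
        refine ⟨hH, ?_, hUh, ?_⟩
        · rw [hXe, hUh]; exact hy
        · rw [hUai]; exact hua
    · intro ω hH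
      rw [M.H_succ g ω t, Hist.ext_eq_iff] at hH
      obtain ⟨hH, hy, huh, hua⟩ := hH
      show M.X g ω (t + 1) = M.f (ξ ω.1 ω.2.2.1) (h.2.1 (Fin.last t)) (vget ω.2.2.1 t)
      rw [M.X_succ, hX ω hH, huh]
    · intro ω hH
      rw [M.H_succ g ω t, Hist.ext_eq_iff] at hH
      obtain ⟨hH, hy, huh, hua⟩ := hH
      have hUai : M.Uai g ω t = g t (Hist.init h) := by rw [System.Uai, hH]
      show M.S g ω (t + 1) = M.fh (σ ω.2.1 ω.2.2.2.2) (g t (Hist.init h))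
        (h.1 (Fin.last (t + 1))) (vget ω.2.2.2.2 t)
      rw [M.S_succ, ← hy, hS ω hH, hUai]
    · intro x w w' z z' hw hz
      dsimp only
      rw [hξd x w w' (agr_mono (Nat.le_succ t) hw), agr_vget hw, agr_vget hz]
      have := hΦd x w w' z z' (agr_mono (Nat.le_succ t) hw)
        (agr_mono (Nat.le_succ (t + 1)) hz)
      tauto
    · intro x w w' hw
      dsimp only
      rw [hξd x w w' (agr_mono (Nat.le_succ t) hw), agr_vget hw]
    · intro s n n' hn
      dsimp only
      rw [hσd s n n' (agr_mono (Nat.le_succ t) hn)]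
      have := hΨd s n n' (agr_mono (Nat.le_succ t) hn)
      tauto
    · intro s n n' hn
      dsimp only
      rw [hσd s n n' (agr_mono (Nat.le_succ t) hn), agr_vget hn]

end Aux7
section Aux8
open Classical
variable {𝒳 𝒮 𝒴 𝒰 𝒲 𝒵 𝒩 : Type} (M : System 𝒳 𝒮 𝒴 𝒰 𝒲 𝒵 𝒩)

lemma sum_pick_left {β : Type} [Fintype β] (v : β) (Q : β → ℝ) :
    ∑ x, (if v = x then (1 : ℝ) else 0) * Q x = Q v := by simp

lemma pull3 {α : Type} [Fintype α] (c : ℝ) (f g : α → ℝ) :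
    ∑ a, c * f a * g a = c * ∑ a, f a * g a := by
  rw [Finset.mul_sum]
  exact Finset.sum_congr rfl fun a _ => by ring

lemma System.K_eq [Fintype 𝒳] [Fintype 𝒲] (xb : 𝒳) (uh : 𝒰) (y' : 𝒴) :
    ∑ c, (M.pW c).toReal * M.Po y' (M.f xb uh c) = ∑ x', M.Po y' x' * M.Pt x' xb uh := by
  calc ∑ c, (M.pW c).toReal * M.Po y' (M.f xb uh c)
      = ∑ c, ∑ x', (M.pW c).toReal *
          ((if M.f xb uh c = x' then (1 : ℝ) else 0) * M.Po y' x') := by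
        refine Finset.sum_congr rfl fun c _ => ?_
        rw [← Finset.mul_sum, sum_pick_left]
    _ = ∑ x', ∑ c, (M.pW c).toReal *
          ((if M.f xb uh c = x' then (1 : ℝ) else 0) * M.Po y' x') := Finset.sum_comm
    _ = ∑ x', M.Po y' x' * M.Pt x' xb uh := by
        refine Finset.sum_congr rfl fun x' _ => ?_
        rw [M.Pt_eq_sum, Finset.mul_sum]
        refine Finset.sum_congr rfl fun c _ => ?_
        ring

lemma System.keyL [Fintype 𝒳] [Fintype 𝒲] [Fintype 𝒵] (t : ℕ) (ht : t < M.T)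
    (Φ : 𝒳 → (Fin (M.T + 1) → 𝒲) → (Fin (M.T + 1) → 𝒵) → Prop)
    (ξ : 𝒳 → (Fin (M.T + 1) → 𝒲) → 𝒳)
    (hΦd : ∀ x w w' z z', agr t w w' → agr (t + 1) z z' → (Φ x w z ↔ Φ x w' z'))
    (hξd : ∀ x w w', agr t w w' → ξ x w = ξ x w') (uh : 𝒰) (y' : 𝒴) :
    ∑ x, ∑ w, ∑ z, (M.pX0 x).toReal * (∏ i, (M.pW (w i)).toReal) *
        (∏ i, (M.pZ (z i)).toReal) *
        ((if Φ x w z then (1 : ℝ) else 0) *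
          (if M.o (M.f (ξ x w) uh (vget w t)) (vget z (t + 1)) = y' then (1 : ℝ) else 0))
      = ∑ xb, (∑ x, ∑ w, ∑ z, (M.pX0 x).toReal * (∏ i, (M.pW (w i)).toReal) *
          (∏ i, (M.pZ (z i)).toReal) *
          ((if Φ x w z then (1 : ℝ) else 0) * (if ξ x w = xb then (1 : ℝ) else 0)))
          * (∑ x', M.Po y' x' * M.Pt x' xb uh) := by
  have hwv : (t % (M.T + 1)) = t := Nat.mod_eq_of_lt (by omega)
  have hzv : ((t + 1) % (M.T + 1)) = t + 1 := Nat.mod_eq_of_lt (by omega)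
  set jw : Fin (M.T + 1) := ⟨t % (M.T + 1), Nat.mod_lt _ (Nat.succ_pos M.T)⟩ with hjw
  set jz : Fin (M.T + 1) := ⟨(t + 1) % (M.T + 1), Nat.mod_lt _ (Nat.succ_pos M.T)⟩ with hjz
  have hvw : ∀ w : Fin (M.T + 1) → 𝒲, vget w t = w jw := fun _ => rfl
  have hvz : ∀ z : Fin (M.T + 1) → 𝒵, vget z (t + 1) = z jz := fun _ => rfl
  -- z-freshness applied pointwise in (x, w)
  have hfz : ∀ x w, ∑ z, (∏ i, (M.pZ (z i)).toReal) *
      ((if Φ x w z then (1 : ℝ) else 0) *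
        (if M.o (M.f (ξ x w) uh (w jw)) (z jz) = y' then (1 : ℝ) else 0))
      = (∑ z, (∏ i, (M.pZ (z i)).toReal) * (if Φ x w z then (1 : ℝ) else 0)) *
        M.Po y' (M.f (ξ x w) uh (w jw)) := by
    intro x w
    rw [fresh_coord M.pZ jz (fun z => if Φ x w z then (1 : ℝ) else 0) ?_
      (fun c => if M.o (M.f (ξ x w) uh (w jw)) c = y' then (1 : ℝ) else 0)]
    · congr 1
      rw [M.Po_eq_sum]
    · intro z c
      have : Φ x w (Function.update z jz c) ↔ Φ x w z := by
        refine hΦd x w w _ z (fun i _ => rfl) (fun i hi => ?_)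
        refine Function.update_of_ne (fun hij => ?_) _ _
        rw [hij] at hi
        simp only [hjz, hzv] at hi
        omega
      simp only [this]
  -- w-freshness applied pointwise in (x, xb)
  have hfw : ∀ x xb, ∑ w, (∏ i, (M.pW (w i)).toReal) *
      (((∑ z, (∏ i, (M.pZ (z i)).toReal) * (if Φ x w z then (1 : ℝ) else 0)) *
        (if ξ x w = xb then (1 : ℝ) else 0)) * M.Po y' (M.f xb uh (w jw)))
      = (∑ w, (∏ i, (M.pW (w i)).toReal) *
          ((∑ z, (∏ i, (M.pZ (z i)).toReal) * (if Φ x w z then (1 : ℝ) else 0)) *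
            (if ξ x w = xb then (1 : ℝ) else 0))) *
        (∑ c, (M.pW c).toReal * M.Po y' (M.f xb uh c)) := by
    intro x xb
    refine fresh_coord M.pW jw _ ?_ (fun c => M.Po y' (M.f xb uh c))
    intro w c
    have hagr : agr t (Function.update w jw c) w := by
      intro i hi
      refine Function.update_of_ne (fun hij => ?_) _ _
      rw [hij] at hi
      simp only [hjw, hwv] at hi
      omega
    have h1 : ∀ z, (Φ x (Function.update w jw c) z ↔ Φ x w z) :=
      fun z => hΦd x _ w z z hagr (fun i _ => rfl)
    have h2 : ξ x (Function.update w jw c) = ξ x w := hξd x _ w hagr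
    simp only [h1, h2]
  calc ∑ x, ∑ w, ∑ z, (M.pX0 x).toReal * (∏ i, (M.pW (w i)).toReal) *
        (∏ i, (M.pZ (z i)).toReal) *
        ((if Φ x w z then (1 : ℝ) else 0) *
          (if M.o (M.f (ξ x w) uh (vget w t)) (vget z (t + 1)) = y' then (1 : ℝ) else 0))
      = ∑ x, ∑ w, ((M.pX0 x).toReal * (∏ i, (M.pW (w i)).toReal)) *
          ((∑ z, (∏ i, (M.pZ (z i)).toReal) * (if Φ x w z then (1 : ℝ) else 0)) *
            M.Po y' (M.f (ξ x w) uh (w jw))) := by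
        refine Finset.sum_congr rfl fun x _ => Finset.sum_congr rfl fun w _ => ?_
        rw [← hfz x w, Finset.mul_sum]
        refine Finset.sum_congr rfl fun z _ => ?_
        rw [hvw, hvz]
        ring
    _ = ∑ x, ∑ xb, (M.pX0 x).toReal * (∑ w, (∏ i, (M.pW (w i)).toReal) *
          (((∑ z, (∏ i, (M.pZ (z i)).toReal) * (if Φ x w z then (1 : ℝ) else 0)) *
            (if ξ x w = xb then (1 : ℝ) else 0)) * M.Po y' (M.f xb uh (w jw)))) := by
        refine Finset.sum_congr rfl fun x _ => ?_
        calc ∑ w, ((M.pX0 x).toReal * (∏ i, (M.pW (w i)).toReal)) *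
              ((∑ z, (∏ i, (M.pZ (z i)).toReal) * (if Φ x w z then (1 : ℝ) else 0)) *
                M.Po y' (M.f (ξ x w) uh (w jw)))
            = ∑ w, ∑ xb, (M.pX0 x).toReal * ((∏ i, (M.pW (w i)).toReal) *
                (((∑ z, (∏ i, (M.pZ (z i)).toReal) * (if Φ x w z then (1 : ℝ) else 0)) *
                  (if ξ x w = xb then (1 : ℝ) else 0)) * M.Po y' (M.f xb uh (w jw)))) := by
              refine Finset.sum_congr rfl fun w _ => ?_
              rw [show M.Po y' (M.f (ξ x w) uh (w jw))
                  = ∑ xb, (if ξ x w = xb then (1 : ℝ) else 0) * M.Po y' (M.f xb uh (w jw))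
                from (sum_pick_left (ξ x w) (fun xb => M.Po y' (M.f xb uh (w jw)))).symm]
              rw [Finset.mul_sum, Finset.mul_sum]
              exact Finset.sum_congr rfl fun xb _ => by ring
          _ = ∑ xb, (M.pX0 x).toReal * (∑ w, (∏ i, (M.pW (w i)).toReal) *
                (((∑ z, (∏ i, (M.pZ (z i)).toReal) * (if Φ x w z then (1 : ℝ) else 0)) *
                  (if ξ x w = xb then (1 : ℝ) else 0)) * M.Po y' (M.f xb uh (w jw)))) := by
              rw [Finset.sum_comm]
              exact Finset.sum_congr rfl fun xb _ => (Finset.mul_sum _ _ _).symm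
    _ = ∑ x, ∑ xb, (M.pX0 x).toReal * ((∑ w, (∏ i, (M.pW (w i)).toReal) *
          ((∑ z, (∏ i, (M.pZ (z i)).toReal) * (if Φ x w z then (1 : ℝ) else 0)) *
            (if ξ x w = xb then (1 : ℝ) else 0))) *
          (∑ c, (M.pW c).toReal * M.Po y' (M.f xb uh c))) := by
        refine Finset.sum_congr rfl fun x _ => Finset.sum_congr rfl fun xb _ => ?_
        rw [hfw x xb]
    _ = ∑ xb, (∑ x, ∑ w, ∑ z, (M.pX0 x).toReal * (∏ i, (M.pW (w i)).toReal) *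
          (∏ i, (M.pZ (z i)).toReal) *
          ((if Φ x w z then (1 : ℝ) else 0) * (if ξ x w = xb then (1 : ℝ) else 0)))
          * (∑ x', M.Po y' x' * M.Pt x' xb uh) := by
        rw [Finset.sum_comm]
        refine Finset.sum_congr rfl fun xb _ => ?_
        conv_rhs => rw [← M.K_eq xb uh y']
        have hx : ∀ x, ∑ w, ∑ z, (M.pX0 x).toReal * (∏ i, (M.pW (w i)).toReal) *
            (∏ i, (M.pZ (z i)).toReal) *
            ((if Φ x w z then (1 : ℝ) else 0) * (if ξ x w = xb then (1 : ℝ) else 0))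
            = (M.pX0 x).toReal * ∑ w, (∏ i, (M.pW (w i)).toReal) *
              ((∑ z, (∏ i, (M.pZ (z i)).toReal) * (if Φ x w z then (1 : ℝ) else 0)) *
                (if ξ x w = xb then (1 : ℝ) else 0)) := by
          intro x
          rw [Finset.mul_sum]
          refine Finset.sum_congr rfl fun w _ => ?_
          rw [pull3 ((M.pX0 x).toReal * ∏ i, (M.pW (w i)).toReal)
            (fun z => ∏ i, (M.pZ (z i)).toReal)
            (fun z => (if Φ x w z then (1 : ℝ) else 0) * (if ξ x w = xb then (1 : ℝ) else 0))]
          have hz2 : ∑ z, (∏ i, (M.pZ (z i)).toReal) *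
              ((if Φ x w z then (1 : ℝ) else 0) * (if ξ x w = xb then (1 : ℝ) else 0))
              = (∑ z, (∏ i, (M.pZ (z i)).toReal) * (if Φ x w z then (1 : ℝ) else 0)) *
                (if ξ x w = xb then (1 : ℝ) else 0) := by
            rw [Finset.sum_mul]
            exact Finset.sum_congr rfl fun z _ => by ring
          rw [hz2]
          ring
        calc ∑ x, (M.pX0 x).toReal * ((∑ w, (∏ i, (M.pW (w i)).toReal) *
              ((∑ z, (∏ i, (M.pZ (z i)).toReal) * (if Φ x w z then (1 : ℝ) else 0)) *
                (if ξ x w = xb then (1 : ℝ) else 0))) *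
              (∑ c, (M.pW c).toReal * M.Po y' (M.f xb uh c)))
            = ∑ x, (∑ w, ∑ z, (M.pX0 x).toReal * (∏ i, (M.pW (w i)).toReal) *
                (∏ i, (M.pZ (z i)).toReal) *
                ((if Φ x w z then (1 : ℝ) else 0) * (if ξ x w = xb then (1 : ℝ) else 0)))
                * (∑ c, (M.pW c).toReal * M.Po y' (M.f xb uh c)) :=
              Finset.sum_congr rfl fun x _ => by rw [hx x]; ring
          _ = (∑ x, ∑ w, ∑ z, (M.pX0 x).toReal * (∏ i, (M.pW (w i)).toReal) *
                (∏ i, (M.pZ (z i)).toReal) *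
                ((if Φ x w z then (1 : ℝ) else 0) * (if ξ x w = xb then (1 : ℝ) else 0)))
                * (∑ c, (M.pW c).toReal * M.Po y' (M.f xb uh c)) :=
              (Finset.sum_mul _ _ _).symm
end Aux8

/-- the one-step prediction of `(Y_(t+1), U_t^h)` depends on the history
only through `(b_t^s, b_t^x)` and the recommendation `u_t^ai`. -/
theorem statement_6 {𝒳 𝒮 𝒴 𝒰 𝒲 𝒵 𝒩 : Type}
    [Fintype 𝒳] [Fintype 𝒮] [Fintype 𝒴] [Fintype 𝒰] [Fintype 𝒲] [Fintype 𝒵] [Fintype 𝒩]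
    [Nonempty 𝒳] [Nonempty 𝒮] [Nonempty 𝒴] [Nonempty 𝒰] [DecidableEq 𝒰]
    (M : System 𝒳 𝒮 𝒴 𝒰 𝒲 𝒵 𝒩) (g : Strat 𝒴 𝒰)
    (t : ℕ) (ht : t < M.T) (h : Hist 𝒴 𝒰 t)
    (hpos : 0 < M.pr {ω | M.H g ω t = h})
    (uai : 𝒰) (huai : uai = g t h) (y' : 𝒴) (uh : 𝒰) :
    M.cpr {ω | M.Y g ω (t + 1) = y' ∧ M.Uh g ω t = uh} {ω | M.H g ω t = h}
      = (∑ s, (if uh = M.gh s uai then (1 : ℝ) else 0) * M.bS g h s) *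
        (∑ x', ∑ x, M.Po y' x' * M.Pt x' x uh * M.bX g h x) := by
  classical
  obtain ⟨Φ, ξ, Ψ, σ, hiff, hXe, hSe, hΦd, hξd, hΨd, hσd⟩ := M.split g t h
  set A : ℝ := ∑ x, ∑ w, ∑ z, (M.pX0 x).toReal * (∏ i, (M.pW (w i)).toReal) *
    (∏ i, (M.pZ (z i)).toReal) * (if Φ x w z then (1 : ℝ) else 0) with hA_def
  set B : ℝ := ∑ s, ∑ n, (M.pS0 s).toReal * (∏ i, (M.pN (n i)).toReal) *
    (if Ψ s n then (1 : ℝ) else 0) with hB_def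
  set AX : 𝒳 → ℝ := fun xb => ∑ x, ∑ w, ∑ z, (M.pX0 x).toReal *
    (∏ i, (M.pW (w i)).toReal) * (∏ i, (M.pZ (z i)).toReal) *
    ((if Φ x w z then (1 : ℝ) else 0) * (if ξ x w = xb then (1 : ℝ) else 0)) with hAX_def
  set BS : 𝒮 → ℝ := fun sb => ∑ s, ∑ n, (M.pS0 s).toReal * (∏ i, (M.pN (n i)).toReal) *
    ((if Ψ s n then (1 : ℝ) else 0) * (if σ s n = sb then (1 : ℝ) else 0)) with hBS_def
  set C : ℝ := ∑ s, ∑ n, (M.pS0 s).toReal * (∏ i, (M.pN (n i)).toReal) *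
    ((if Ψ s n then (1 : ℝ) else 0) *
      (if uh = M.gh (σ s n) uai then (1 : ℝ) else 0)) with hC_def
  have indnn : ∀ P : Prop, 0 ≤ (if P then (1 : ℝ) else 0) := fun P => by
    by_cases hP : P <;> simp [hP]
  -- step 1 : pr {H = h} = A * B
  have hpt1 : ∀ ω : M.Ω, (if ω ∈ {ω : M.Ω | M.H g ω t = h} then (M.pΩ ω).toReal else 0)
      = (M.pΩ ω).toReal *
        ((fun x w z => if Φ x w z then (1 : ℝ) else 0) ω.1 ω.2.2.1 ω.2.2.2.1 *
          (fun s n => if Ψ s n then (1 : ℝ) else 0) ω.2.1 ω.2.2.2.2) := by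
    intro ω
    dsimp only
    simp only [Set.mem_setOf_eq]
    by_cases hω : M.H g ω t = h
    · obtain ⟨hp, hq⟩ := (hiff ω).1 hω
      rw [if_pos hω, if_pos hp, if_pos hq]; ring
    · have hn : ¬(Φ ω.1 ω.2.2.1 ω.2.2.2.1 ∧ Ψ ω.2.1 ω.2.2.2.2) :=
        fun hc => hω ((hiff ω).2 hc)
      rw [if_neg hω]
      by_cases hp : Φ ω.1 ω.2.2.1 ω.2.2.2.1
      · rw [if_pos hp, if_neg (fun hq => hn ⟨hp, hq⟩)]; ring
      · rw [if_neg hp]; ring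
  have h1 : M.pr {ω : M.Ω | M.H g ω t = h} = A * B := by
    rw [M.pr_eq_sum]
    exact (Finset.sum_congr rfl (fun ω _ => hpt1 ω)).trans
      ((M.sum_split (fun x w z => if Φ x w z then (1 : ℝ) else 0)
        (fun s n => if Ψ s n then (1 : ℝ) else 0)).trans rfl)
  -- step 2 : pr {X = xb} ∩ {H = h} = AX xb * B
  have h2 : ∀ xb : 𝒳, M.pr ({ω : M.Ω | M.X g ω t = xb} ∩ {ω : M.Ω | M.H g ω t = h})
      = AX xb * B := by
    intro xb
    rw [M.pr_eq_sum]
    refine (Finset.sum_congr rfl fun ω _ => ?_).trans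
      ((M.sum_split (fun x w z => (if Φ x w z then (1 : ℝ) else 0) *
          (if ξ x w = xb then (1 : ℝ) else 0))
        (fun s n => if Ψ s n then (1 : ℝ) else 0)).trans rfl)
    simp only [Set.mem_inter_iff, Set.mem_setOf_eq]
    by_cases hω : M.H g ω t = h
    · obtain ⟨hp, hq⟩ := (hiff ω).1 hω
      have hXev := hXe ω hω
      by_cases hx : ξ ω.1 ω.2.2.1 = xb
      · rw [if_pos ⟨by rw [hXev]; exact hx, hω⟩, if_pos hp, if_pos hx, if_pos hq]; ring
      · rw [if_neg (fun hc => hx (by rw [← hXev]; exact hc.1)), if_neg hx]; ring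
    · have hn : ¬(Φ ω.1 ω.2.2.1 ω.2.2.2.1 ∧ Ψ ω.2.1 ω.2.2.2.2) :=
        fun hc => hω ((hiff ω).2 hc)
      rw [if_neg (fun hc => hω hc.2)]
      by_cases hp : Φ ω.1 ω.2.2.1 ω.2.2.2.1
      · rw [if_pos hp, if_neg (fun hq => hn ⟨hp, hq⟩)]; ring
      · rw [if_neg hp]; ring

  -- step 3 : pr {S = sb} ∩ {H = h} = A * BS sb
  have h3 : ∀ sb : 𝒮, M.pr ({ω : M.Ω | M.S g ω t = sb} ∩ {ω : M.Ω | M.H g ω t = h})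
      = A * BS sb := by
    intro sb
    rw [M.pr_eq_sum]
    refine (Finset.sum_congr rfl fun ω _ => ?_).trans
      ((M.sum_split (fun x w z => if Φ x w z then (1 : ℝ) else 0)
        (fun s n => (if Ψ s n then (1 : ℝ) else 0) *
          (if σ s n = sb then (1 : ℝ) else 0))).trans rfl)
    simp only [Set.mem_inter_iff, Set.mem_setOf_eq]
    by_cases hω : M.H g ω t = h
    · obtain ⟨hp, hq⟩ := (hiff ω).1 hω
      have hSev := hSe ω hω
      by_cases hs : σ ω.2.1 ω.2.2.2.2 = sb
      · rw [if_pos ⟨by rw [hSev]; exact hs, hω⟩, if_pos hp, if_pos hq, if_pos hs]; ring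
      · rw [if_neg (fun hc => hs (by rw [← hSev]; exact hc.1)), if_neg hs]; ring
    · have hn : ¬(Φ ω.1 ω.2.2.1 ω.2.2.2.1 ∧ Ψ ω.2.1 ω.2.2.2.2) :=
        fun hc => hω ((hiff ω).2 hc)
      rw [if_neg (fun hc => hω hc.2)]
      by_cases hp : Φ ω.1 ω.2.2.1 ω.2.2.2.1
      · rw [if_pos hp, if_neg (fun hq => hn ⟨hp, hq⟩)]; ring
      · rw [if_neg hp]; ring

  -- step 4 : the main event
  have h4 : M.pr ({ω : M.Ω | M.Y g ω (t + 1) = y' ∧ M.Uh g ω t = uh} ∩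
      {ω : M.Ω | M.H g ω t = h})
      = (∑ xb, AX xb * (∑ x', M.Po y' x' * M.Pt x' xb uh)) * C := by
    rw [M.pr_eq_sum]
    refine (Finset.sum_congr rfl fun ω _ => ?_).trans
      ((M.sum_split (fun x w z => (if Φ x w z then (1 : ℝ) else 0) *
          (if M.o (M.f (ξ x w) uh (vget w t)) (vget z (t + 1)) = y' then (1 : ℝ) else 0))
        (fun s n => (if Ψ s n then (1 : ℝ) else 0) *
          (if uh = M.gh (σ s n) uai then (1 : ℝ) else 0))).trans
        (congrArg (· * C) (M.keyL t ht Φ ξ hΦd hξd uh y')))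
    simp only [Set.mem_inter_iff, Set.mem_setOf_eq]
    by_cases hω : M.H g ω t = h
    · obtain ⟨hp, hq⟩ := (hiff ω).1 hω
      have hXev := hXe ω hω
      have hSev := hSe ω hω
      have hU : M.Uh g ω t = M.gh (σ ω.2.1 ω.2.2.2.2) uai := by
        show M.gh (M.S g ω t) (M.Uai g ω t) = _
        rw [hSev, System.Uai, hω, ← huai]
      have hY : M.Y g ω (t + 1) = M.o (M.f (ξ ω.1 ω.2.2.1) (M.Uh g ω t)
          (vget ω.2.2.1 t)) (vget ω.2.2.2.1 (t + 1)) := by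
        rw [M.Y_succ, hXev]
      by_cases hg : uh = M.gh (σ ω.2.1 ω.2.2.2.2) uai
      · have hUu : M.Uh g ω t = uh := by rw [hU, ← hg]
        by_cases hy : M.o (M.f (ξ ω.1 ω.2.2.1) uh (vget ω.2.2.1 t))
            (vget ω.2.2.2.1 (t + 1)) = y'
        · have hYy : M.Y g ω (t + 1) = y' := by rw [hY, hUu]; exact hy
          rw [if_pos ⟨⟨hYy, hUu⟩, hω⟩, if_pos hp, if_pos hy, if_pos hq, if_pos hg]; ring
        · have hYn : ¬(M.Y g ω (t + 1) = y') := by rw [hY, hUu]; exact hy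
          rw [if_neg (fun hc => hYn hc.1.1), if_neg hy]; ring
      · have hUn : M.Uh g ω t ≠ uh := by rw [hU]; exact fun e => hg e.symm
        rw [if_neg (fun hc => hUn hc.1.2), if_neg hg]; ring
    · have hn : ¬(Φ ω.1 ω.2.2.1 ω.2.2.2.1 ∧ Ψ ω.2.1 ω.2.2.2.2) :=
        fun hc => hω ((hiff ω).2 hc)
      rw [if_neg (fun hc => hω hc.2)]
      by_cases hp : Φ ω.1 ω.2.2.1 ω.2.2.2.1
      · rw [if_pos hp, if_neg (fun hq => hn ⟨hp, hq⟩)]; ring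
      · rw [if_neg hp]; ring

  clear_value A B AX BS C
  -- positivity
  have hA0 : 0 ≤ A := by
    rw [hA_def]
    refine Finset.sum_nonneg fun x _ => Finset.sum_nonneg fun w _ =>
      Finset.sum_nonneg fun z _ => ?_
    exact mul_nonneg (mul_nonneg (mul_nonneg ENNReal.toReal_nonneg
      (Finset.prod_nonneg fun i _ => ENNReal.toReal_nonneg))
      (Finset.prod_nonneg fun i _ => ENNReal.toReal_nonneg)) (indnn _)
  have hB0 : 0 ≤ B := by
    rw [hB_def]
    refine Finset.sum_nonneg fun s _ => Finset.sum_nonneg fun n _ => ?_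
    exact mul_nonneg (mul_nonneg ENNReal.toReal_nonneg
      (Finset.prod_nonneg fun i _ => ENNReal.toReal_nonneg)) (indnn _)
  have hABpos : 0 < A * B := by rw [← h1]; exact hpos
  have hApos : 0 < A := by
    rcases hA0.lt_or_eq with hlt | heq
    · exact hlt
    · exfalso; rw [← heq, zero_mul] at hABpos; exact lt_irrefl 0 hABpos
  have hBpos : 0 < B := by
    rcases hB0.lt_or_eq with hlt | heq
    · exact hlt
    · exfalso; rw [← heq, mul_zero] at hABpos; exact lt_irrefl 0 hABpos
  -- beliefs
  have hbX : ∀ xb : 𝒳, M.bX g h xb = AX xb / A := by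
    intro xb
    rw [System.bX, System.cpr, h2 xb, h1]
    field_simp
  have hbS : ∀ sb : 𝒮, M.bS g h sb = BS sb / B := by
    intro sb
    rw [System.bS, System.cpr, h3 sb, h1]
    field_simp
  -- C as a sum over the belief on S
  have hC : ∑ sb, (if uh = M.gh sb uai then (1 : ℝ) else 0) * BS sb = C := by
    simp only [hC_def, hBS_def]
    calc ∑ sb, (if uh = M.gh sb uai then (1 : ℝ) else 0) *
          (∑ s, ∑ n, (M.pS0 s).toReal * (∏ i, (M.pN (n i)).toReal) *
            ((if Ψ s n then (1 : ℝ) else 0) * (if σ s n = sb then (1 : ℝ) else 0)))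
        = ∑ sb, ∑ s, ∑ n, (if σ s n = sb then (1 : ℝ) else 0) *
            ((M.pS0 s).toReal * (∏ i, (M.pN (n i)).toReal) *
              ((if Ψ s n then (1 : ℝ) else 0) *
                (if uh = M.gh sb uai then (1 : ℝ) else 0))) := by
          refine Finset.sum_congr rfl fun sb _ => ?_
          rw [Finset.mul_sum]
          refine Finset.sum_congr rfl fun s _ => ?_
          rw [Finset.mul_sum]
          exact Finset.sum_congr rfl fun n _ => by ring
      _ = ∑ s, ∑ n, ∑ sb, (if σ s n = sb then (1 : ℝ) else 0) *
            ((M.pS0 s).toReal * (∏ i, (M.pN (n i)).toReal) *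
              ((if Ψ s n then (1 : ℝ) else 0) *
                (if uh = M.gh sb uai then (1 : ℝ) else 0))) := by
          rw [Finset.sum_comm]
          exact Finset.sum_congr rfl fun s _ => Finset.sum_comm
      _ = ∑ s, ∑ n, (M.pS0 s).toReal * (∏ i, (M.pN (n i)).toReal) *
            ((if Ψ s n then (1 : ℝ) else 0) *
              (if uh = M.gh (σ s n) uai then (1 : ℝ) else 0)) := by
          refine Finset.sum_congr rfl fun s _ => Finset.sum_congr rfl fun n _ => ?_
          exact sum_pick_left (σ s n) _
  -- final assembly
  rw [System.cpr, h4, h1]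
  simp only [hbX, hbS]
  have hR1 : ∑ s, (if uh = M.gh s uai then (1 : ℝ) else 0) * (BS s / B) = C / B := by
    rw [← hC, Finset.sum_div]
    exact Finset.sum_congr rfl fun sb _ => by ring
  have hR2 : ∑ x', ∑ x, M.Po y' x' * M.Pt x' x uh * (AX x / A)
      = (∑ xb, AX xb * (∑ x', M.Po y' x' * M.Pt x' xb uh)) / A := by
    rw [Finset.sum_comm, Finset.sum_div]
    refine Finset.sum_congr rfl fun x _ => ?_
    rw [Finset.mul_sum, Finset.sum_div]
    exact Finset.sum_congr rfl fun x' _ => by ring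
  rw [hR1, hR2]
  field_simp

end CPHS
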